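/- arXiv:2310.10257 — 2 statements merged into one kernel-verified Lean document; each statement's English description precedes it below -/
import Mathlib

section
/- Let μ be a probability measure on ℤ^d whose jump generating function P(α) = Σ_{k∈ℤ^d} exp(α·k) μ(k) is finite on a neighborhood of D = {α ∈ ℝ^d : P(α) ≤ 1}, and suppose the associated random walk is irreducible and has nonzero mean. Then the set D is compact and strictly convex. -/
open scoped BigOperators RealInnerProductSpace
open Filter MeasureTheory Classical

attribute [local instance] Classical.propDecidable

noncomputable section

abbrev V (d : ℕ) := EuclideanSpace ℝ (Fin d)
abbrev Zd (d : ℕ) := Fin d → ℤ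

/-- Embedding of lattice points into ℝ^d. -/
def toV {d : ℕ} (m : Zd d) : V d := WithLp.toLp 2 (fun i => (m i : ℝ))

/-- Scalar product α·m of a real vector with a lattice point. -/
def dotZ {d : ℕ} (α : V d) (m : Zd d) : ℝ := ∑ i, α i * (m i : ℝ)

/-- n-step transition probability P_0(Z(n) = m) of the homogeneous walk with step law μ. -/
def stepProb {d : ℕ} (μ : Zd d → ℝ) : ℕ → Zd d → ℝ
  | 0 => fun m => if m = 0 then 1 else 0
  | n + 1 => fun m => ∑' j : Zd d, stepProb μ n j * μ (m - j)

/-- P_k(Z(n) = m, τ > n) for the walk killed at the first exit from C. -/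
def killedProb {d : ℕ} (μ : Zd d → ℝ) (C : Set (V d)) (k : Zd d) : ℕ → Zd d → ℝ
  | 0 => fun m => if m = k ∧ toV m ∈ C then 1 else 0
  | n + 1 => fun m =>
      if toV m ∈ C then ∑' j : Zd d, killedProb μ C k n j * μ (m - j) else 0

/-- P_k(Z(τ) = m, τ = n). -/
def exitProb {d : ℕ} (μ : Zd d → ℝ) (C : Set (V d)) (k : Zd d) : ℕ → Zd d → ℝ
  | 0 => fun m => if m = k ∧ toV m ∉ C then 1 else 0
  | n + 1 => fun m =>
      if toV m ∉ C then ∑' j : Zd d, killedProb μ C k n j * μ (m - j) else 0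

/-- P_k(Z(τ) = m, τ < ∞). -/
def exitTotal {d : ℕ} (μ : Zd d → ℝ) (C : Set (V d)) (k m : Zd d) : ℝ :=
  ∑' n : ℕ, exitProb μ C k n m

/-- Green function G_C(k,m) of the walk killed at the exit from C. -/
def GreenC {d : ℕ} (μ : Zd d → ℝ) (C : Set (V d)) (k m : Zd d) : ℝ :=
  ∑' n : ℕ, killedProb μ C k n m

/-- Green function of the free walk. -/
def Green {d : ℕ} (μ : Zd d → ℝ) (k m : Zd d) : ℝ :=
  ∑' n : ℕ, stepProb μ n (m - k)

/-- Monomial x^m = x₁^{m₁}⋯x_d^{m_d} for x ∈ ℂ^d, m ∈ ℤ^d. -/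
def cpow {d : ℕ} (x : Fin d → ℂ) (m : Zd d) : ℂ := ∏ i, x i ^ (m i)

/-- Monomial r^m for r ∈ ℝ^d, m ∈ ℤ^d. -/
def rpowZ {d : ℕ} (r : Fin d → ℝ) (m : Zd d) : ℝ := ∏ i, r i ^ (m i)

/-- Multivariate generating function 𝒫(x) = Σ_k μ(k) x^k. -/
def calP {d : ℕ} (μ : Zd d → ℝ) (x : Fin d → ℂ) : ℂ := ∑' k : Zd d, (μ k : ℂ) * cpow x k

/-- Real version of the generating function on (0,∞)^d. -/
def calPR {d : ℕ} (μ : Zd d → ℝ) (r : Fin d → ℝ) : ℝ := ∑' k : Zd d, μ k * rpowZ r k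

/-- Jump generating function P(α) = Σ_k e^{α·k} μ(k). -/
def Pgen {d : ℕ} (μ : Zd d → ℝ) (α : V d) : ℝ := ∑' k : Zd d, μ k * Real.exp (dotZ α k)

/-- The set D = {α : P(α) ≤ 1}. -/
def Dset {d : ℕ} (μ : Zd d → ℝ) : Set (V d) := {α | Pgen μ α ≤ 1}

/-- μ is a probability measure on ℤ^d. -/
def IsProb {d : ℕ} (μ : Zd d → ℝ) : Prop := (∀ k, 0 ≤ μ k) ∧ HasSum μ 1

/-- Irreducibility of the walk in ℤ^d: every point is reachable from 0. -/
def IrreducibleWalk {d : ℕ} (μ : Zd d → ℝ) : Prop := ∀ m : Zd d, ∃ n, 0 < stepProb μ n m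

/-- P is finite on a neighborhood of D. -/
def FiniteNearD {d : ℕ} (μ : Zd d → ℝ) : Prop :=
  ∃ U : Set (V d), IsOpen U ∧ Dset μ ⊆ U ∧
    ∀ α ∈ U, Summable (fun k : Zd d => μ k * Real.exp (dotZ α k))

/-- The mean jump Σ_k k μ(k) is nonzero. -/
def NonzeroMean {d : ℕ} (μ : Zd d → ℝ) : Prop :=
  ∃ i : Fin d, (∑' k : Zd d, (k i : ℝ) * μ k) ≠ 0

/-- Hypotheses (A1). -/
def A1 {d : ℕ} (μ : Zd d → ℝ) : Prop :=
  IsProb μ ∧ IrreducibleWalk μ ∧ FiniteNearD μ ∧ NonzeroMean μ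

/-- C is an open cone with vertex 0. -/
def IsOpenCone {d : ℕ} (C : Set (V d)) : Prop :=
  IsOpen C ∧ ∀ x ∈ C, ∀ c : ℝ, 0 < c → c • x ∈ C

/-- Hypothesis (A2): irreducibility of the killed walk on ℤ^d ∩ C. -/
def A2 {d : ℕ} (μ : Zd d → ℝ) (C : Set (V d)) : Prop :=
  ∀ k m : Zd d, toV k ∈ C → toV m ∈ C → ∃ n, 0 < killedProb μ C k n m

/-- The harmonic function h_α(k) = e^{α·k} − E_k(e^{α·Z(τ)}; τ<∞). -/
def hFun {d : ℕ} (μ : Zd d → ℝ) (C : Set (V d)) (α : V d) (k : Zd d) : ℝ :=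
  Real.exp (dotZ α k) - ∑' m : Zd d, exitTotal μ C k m * Real.exp (dotZ α m)

/-- α ↦ α·u attains its maximum over D at αu. -/
def IsMaxOn' {d : ℕ} (μ : Zd d → ℝ) (u αu : V d) : Prop :=
  αu ∈ Dset μ ∧ ∀ β ∈ Dset μ, ⟪β, u⟫ ≤ ⟪αu, u⟫

/-- The generating function H_k(x) = Σ_{m ∈ ℤ^d∩C} G_C(k,m) x^m. -/
def Hfun {d : ℕ} (μ : Zd d → ℝ) (C : Set (V d)) (k : Zd d) (x : Fin d → ℂ) : ℂ :=
  ∑' m : Zd d, if toV m ∈ C then (GreenC μ C k m : ℂ) * cpow x m else 0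

/-- The generating function F_k(x) = Σ_{m ∈ ℤ^d∖C} P_k(Z(τ)=m, τ<∞) x^m. -/
def Ffun {d : ℕ} (μ : Zd d → ℝ) (C : Set (V d)) (k : Zd d) (x : Fin d → ℂ) : ℂ :=
  ∑' m : Zd d, if toV m ∉ C then (exitTotal μ C k m : ℂ) * cpow x m else 0

/-!
`D` is closed, being the intersection over finite sets `F` of the closed sets
`{α | ∑_{k ∈ F} μ k e^{α·k} ≤ 1}`. Tilting the `n`-step law by `e^{α·m}` turns it into
the `n`-fold convolution power of `μ k e^{α·k}`, so `p_n(m) e^{α·m} ≤ P(α)^n ≤ 1` on `D`.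
By irreducibility every `m` has some `p_n(m) > 0`, so `α·m ≤ -log p_n(m)` on `D`; taking
`m = ±eᵢ` bounds every coordinate. For strict convexity, irreducibility implies that the
support of `μ` separates any two distinct `α, β`, so strict convexity of `exp` gives `P < 1`
strictly inside the segment; `P` is convex, hence continuous, on the open set where it
converges, so these points are interior to `D`.
-/

open scoped ENNReal

lemma ENNReal.ofReal_tsum_le_tsum_ofReal {ι : Type*} {f : ι → ℝ} (hf : ∀ i, 0 ≤ f i) :
    ENNReal.ofReal (∑' i, f i) ≤ ∑' i, ENNReal.ofReal (f i) := by
  by_cases hs : Summable f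
  · exact (ENNReal.ofReal_tsum_of_nonneg hf hs).le
  · simp [tsum_eq_zero_of_not_summable hs]

lemma ENNReal.tsum_tsum_mul_sub {G : Type*} [AddGroup G] (f g : G → ℝ≥0∞) :
    ∑' m, ∑' j, f j * g (m - j) = (∑' j, f j) * ∑' k, g k := by
  rw [ENNReal.tsum_comm, ← ENNReal.tsum_mul_right]
  refine tsum_congr fun j => ?_
  rw [ENNReal.tsum_mul_left]
  exact congrArg (f j * ·) ((Equiv.subRight j).tsum_eq g)

section dotZ

variable {d : ℕ}

lemma dotZ_add_right (α : V d) (j k : Zd d) : dotZ α (j + k) = dotZ α j + dotZ α k := by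
  simp [dotZ, mul_add, Finset.sum_add_distrib]

lemma dotZ_single (α : V d) (i : Fin d) (c : ℤ) : dotZ α (Pi.single i c) = α i * c := by
  simp [dotZ, Pi.single_apply]

lemma dotZ_smul_add_smul_left (α β : V d) (s t : ℝ) (k : Zd d) :
    dotZ (s • α + t • β) k = s * dotZ α k + t * dotZ β k := by
  simp [dotZ, Finset.mul_sum, ← Finset.sum_add_distrib, add_mul, mul_assoc]

lemma continuous_dotZ_left (k : Zd d) : Continuous fun α : V d => dotZ α k := by
  unfold dotZ; fun_prop

end dotZ

section stepProb

variable {d : ℕ} {μ : Zd d → ℝ}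

lemma stepProb_nonneg (hμ : ∀ k, 0 ≤ μ k) (n : ℕ) (m : Zd d) : 0 ≤ stepProb μ n m := by
  induction n generalizing m with
  | zero => simp only [stepProb]; split_ifs <;> norm_num
  | succ n ih => exact tsum_nonneg fun j => mul_nonneg (ih j) (hμ _)

lemma stepProb_support_induction {p : Zd d → Prop} (h0 : p 0)
    (hadd : ∀ j k, p j → μ k ≠ 0 → p (j + k)) {n : ℕ} {m : Zd d}
    (hm : stepProb μ n m ≠ 0) : p m := by
  induction n generalizing m with
  | zero =>
    obtain rfl : m = 0 := by by_contra h; simp [stepProb, h] at hm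
    exact h0
  | succ n ih =>
    obtain ⟨j, hj⟩ : ∃ j, stepProb μ n j * μ (m - j) ≠ 0 := by
      by_contra! h
      exact hm (by simp [stepProb, h])
    simpa using hadd j (m - j) (ih (left_ne_zero_of_mul hj)) (right_ne_zero_of_mul hj)

lemma Pgen_nonneg (hμ : ∀ k, 0 ≤ μ k) (α : V d) : 0 ≤ Pgen μ α :=
  tsum_nonneg fun k => mul_nonneg (hμ k) (Real.exp_pos _).le

-- Stated in `ℝ≥0∞` so that no summability of the convolution sums defining `stepProb`
-- is needed.
lemma tsum_ofReal_stepProb_mul_exp_le (hμ : ∀ k, 0 ≤ μ k) {α : V d}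
    (hα : Summable fun k => μ k * Real.exp (dotZ α k)) (n : ℕ) :
    ∑' m, ENNReal.ofReal (stepProb μ n m * Real.exp (dotZ α m)) ≤
      ENNReal.ofReal (Pgen μ α) ^ n := by
  induction n with
  | zero =>
    rw [tsum_eq_single 0 fun m hm => by simp [stepProb, hm]]
    simp [stepProb, dotZ]
  | succ n ih =>
    set w : Zd d → ℝ≥0∞ := fun j => ENNReal.ofReal (stepProb μ n j * Real.exp (dotZ α j))
    set q : Zd d → ℝ≥0∞ := fun k => ENNReal.ofReal (μ k * Real.exp (dotZ α k))
    have hstep : ∀ m, ENNReal.ofReal (stepProb μ (n + 1) m * Real.exp (dotZ α m)) ≤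
        ∑' j, w j * q (m - j) := by
      intro m
      rw [stepProb, ← tsum_mul_right]
      refine (ENNReal.ofReal_tsum_le_tsum_ofReal fun j =>
        mul_nonneg (mul_nonneg (stepProb_nonneg hμ n j) (hμ _)) (Real.exp_pos _).le).trans_eq
        (tsum_congr fun j => ?_)
      rw [← ENNReal.ofReal_mul (mul_nonneg (stepProb_nonneg hμ n j) (Real.exp_pos _).le)]
      congr 1
      rw [← add_sub_cancel j m, dotZ_add_right, Real.exp_add, add_sub_cancel_left]
      ring
    calc ∑' m, ENNReal.ofReal (stepProb μ (n + 1) m * Real.exp (dotZ α m))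
        ≤ ∑' m, ∑' j, w j * q (m - j) := ENNReal.tsum_le_tsum hstep
      _ = (∑' j, w j) * ENNReal.ofReal (Pgen μ α) := by
        rw [ENNReal.tsum_tsum_mul_sub, Pgen,
          ENNReal.ofReal_tsum_of_nonneg (fun k => mul_nonneg (hμ k) (Real.exp_pos _).le) hα]
      _ ≤ ENNReal.ofReal (Pgen μ α) ^ (n + 1) := by
        rw [pow_succ]; gcongr

lemma stepProb_mul_exp_le (hμ : ∀ k, 0 ≤ μ k) {α : V d}
    (hα : Summable fun k => μ k * Real.exp (dotZ α k)) (n : ℕ) (m : Zd d) :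
    stepProb μ n m * Real.exp (dotZ α m) ≤ Pgen μ α ^ n := by
  have h := (ENNReal.le_tsum m).trans (tsum_ofReal_stepProb_mul_exp_le hμ hα n)
  rwa [← ENNReal.ofReal_pow (Pgen_nonneg hμ α),
    ENNReal.ofReal_le_ofReal_iff (pow_nonneg (Pgen_nonneg hμ α) n)] at h

end stepProb

section Dset

variable {d : ℕ} {μ : Zd d → ℝ}

lemma FiniteNearD.summable (h : FiniteNearD μ) {α : V d} (hα : α ∈ Dset μ) :
    Summable fun k => μ k * Real.exp (dotZ α k) := by
  obtain ⟨U, -, hDU, hU⟩ := h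
  exact hU α (hDU hα)

lemma dotZ_le_neg_log_stepProb (hμ : ∀ k, 0 ≤ μ k)
    (hD : ∀ α ∈ Dset μ, Summable fun k => μ k * Real.exp (dotZ α k))
    {n : ℕ} {m : Zd d} (hnm : 0 < stepProb μ n m) {α : V d} (hα : α ∈ Dset μ) :
    dotZ α m ≤ -Real.log (stepProb μ n m) := by
  have h : Real.exp (dotZ α m + Real.log (stepProb μ n m)) ≤ 1 := by
    rw [Real.exp_add, Real.exp_log hnm, mul_comm]
    exact (stepProb_mul_exp_le hμ (hD α hα) n m).trans
      (pow_le_one₀ (Pgen_nonneg hμ α) hα)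
  linarith [Real.exp_le_one_iff.1 h]

lemma isBounded_Dset (hμ : ∀ k, 0 ≤ μ k) (hirr : IrreducibleWalk μ)
    (hD : ∀ α ∈ Dset μ, Summable fun k => μ k * Real.exp (dotZ α k)) :
    Bornology.IsBounded (Dset μ) := by
  have hbound : ∀ m : Zd d, ∃ B, ∀ α ∈ Dset μ, dotZ α m ≤ B := fun m =>
    let ⟨_, hnm⟩ := hirr m
    ⟨_, fun _ hα => dotZ_le_neg_log_stepProb hμ hD hnm hα⟩
  -- the bornology of `PiLp` is induced by `ofLp`
  refine Bornology.isBounded_induced.2 (Bornology.forall_isBounded_image_eval_iff.1 fun i => ?_)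
  obtain ⟨Bup, hBup⟩ := hbound (Pi.single i 1)
  obtain ⟨Blo, hBlo⟩ := hbound (Pi.single i (-1))
  refine (Metric.isBounded_Icc (-Blo) Bup).subset ?_
  rintro _ ⟨_, ⟨α, hα, rfl⟩, rfl⟩
  have hup := hBup α hα
  have hlo := hBlo α hα
  simp only [dotZ_single, Int.cast_one, Int.cast_neg, mul_one, mul_neg] at hup hlo
  exact ⟨by linarith, hup⟩

lemma isClosed_Dset (hμ : ∀ k, 0 ≤ μ k)
    (hD : ∀ α ∈ Dset μ, Summable fun k => μ k * Real.exp (dotZ α k)) :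
    IsClosed (Dset μ) := by
  have hnn : ∀ α k, 0 ≤ μ k * Real.exp (dotZ α k) := fun α k =>
    mul_nonneg (hμ k) (Real.exp_pos _).le
  have hDeq :
      Dset μ = ⋂ F : Finset (Zd d), {α | ∑ k ∈ F, μ k * Real.exp (dotZ α k) ≤ 1} := by
    ext α
    simp only [Set.mem_iInter, Set.mem_ofPred_eq]
    refine ⟨fun hα F => ((hD α hα).sum_le_tsum F fun k _ => hnn α k).trans hα, fun h => ?_⟩
    exact (summable_of_sum_le (hnn α) h).tsum_le_of_sum_le h
  rw [hDeq]
  exact isClosed_iInter fun F => isClosed_le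
    (continuous_finsetSum F fun k _ => continuous_const.mul
      (Real.continuous_exp.comp (continuous_dotZ_left k))) continuous_const

end Dset

section Convexity

variable {d : ℕ} {μ : Zd d → ℝ}

lemma exists_ne_zero_dotZ_ne (hirr : IrreducibleWalk μ) {α β : V d} (hne : α ≠ β) :
    ∃ k, μ k ≠ 0 ∧ dotZ α k ≠ dotZ β k := by
  by_contra! h
  refine hne (PiLp.ext fun i => ?_)
  obtain ⟨n, hn⟩ := hirr (Pi.single i 1)
  have := stepProb_support_induction (p := fun m => dotZ α m = dotZ β m) (by simp [dotZ])
    (fun j k hj hk => by rw [dotZ_add_right, dotZ_add_right, hj, h k hk]) hn.ne'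
  simpa [dotZ_single] using this

variable {α β : V d} {s t : ℝ}

lemma mul_exp_dotZ_smul_add_smul_le (hμ : ∀ k, 0 ≤ μ k) (hs : 0 ≤ s) (ht : 0 ≤ t)
    (hst : s + t = 1) (k : Zd d) :
    μ k * Real.exp (dotZ (s • α + t • β) k) ≤
      s * (μ k * Real.exp (dotZ α k)) + t * (μ k * Real.exp (dotZ β k)) := by
  have h := convexOn_exp.2 (Set.mem_univ (dotZ α k)) (Set.mem_univ (dotZ β k)) hs ht hst
  rw [dotZ_smul_add_smul_left]
  simp only [smul_eq_mul] at h
  nlinarith [hμ k]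

lemma mul_exp_dotZ_smul_add_smul_lt {k : Zd d} (hk : 0 < μ k) (hne : dotZ α k ≠ dotZ β k)
    (hs : 0 < s) (ht : 0 < t) (hst : s + t = 1) :
    μ k * Real.exp (dotZ (s • α + t • β) k) <
      s * (μ k * Real.exp (dotZ α k)) + t * (μ k * Real.exp (dotZ β k)) := by
  have h := strictConvexOn_exp.2 (Set.mem_univ (dotZ α k)) (Set.mem_univ (dotZ β k))
    hne hs ht hst
  rw [dotZ_smul_add_smul_left]
  simp only [smul_eq_mul] at h
  nlinarith

lemma summable_mul_exp_dotZ_smul_add_smul (hμ : ∀ k, 0 ≤ μ k)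
    (hα : Summable fun k => μ k * Real.exp (dotZ α k))
    (hβ : Summable fun k => μ k * Real.exp (dotZ β k)) (hs : 0 ≤ s) (ht : 0 ≤ t)
    (hst : s + t = 1) :
    Summable fun k => μ k * Real.exp (dotZ (s • α + t • β) k) :=
  ((hα.mul_left s).add (hβ.mul_left t)).of_nonneg_of_le
    (fun k => mul_nonneg (hμ k) (Real.exp_pos _).le)
    (mul_exp_dotZ_smul_add_smul_le hμ hs ht hst)

lemma Pgen_smul_add_smul_le (hμ : ∀ k, 0 ≤ μ k)
    (hα : Summable fun k => μ k * Real.exp (dotZ α k))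
    (hβ : Summable fun k => μ k * Real.exp (dotZ β k)) (hs : 0 ≤ s) (ht : 0 ≤ t)
    (hst : s + t = 1) :
    Pgen μ (s • α + t • β) ≤ s * Pgen μ α + t * Pgen μ β := by
  rw [Pgen, Pgen, Pgen, ← tsum_mul_left, ← tsum_mul_left,
    ← (hα.mul_left s).tsum_add (hβ.mul_left t)]
  exact (summable_mul_exp_dotZ_smul_add_smul hμ hα hβ hs ht hst).tsum_le_tsum
    (mul_exp_dotZ_smul_add_smul_le hμ hs ht hst) ((hα.mul_left s).add (hβ.mul_left t))

lemma Pgen_smul_add_smul_lt (hμ : ∀ k, 0 ≤ μ k)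
    (hα : Summable fun k => μ k * Real.exp (dotZ α k))
    (hβ : Summable fun k => μ k * Real.exp (dotZ β k)) {k : Zd d} (hk : μ k ≠ 0)
    (hne : dotZ α k ≠ dotZ β k) (hs : 0 < s) (ht : 0 < t) (hst : s + t = 1) :
    Pgen μ (s • α + t • β) < s * Pgen μ α + t * Pgen μ β := by
  rw [Pgen, Pgen, Pgen, ← tsum_mul_left, ← tsum_mul_left,
    ← (hα.mul_left s).tsum_add (hβ.mul_left t)]
  exact Summable.tsum_lt_tsum (mul_exp_dotZ_smul_add_smul_le hμ hs.le ht.le hst)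
    (mul_exp_dotZ_smul_add_smul_lt ((hμ k).lt_of_ne' hk) hne hs ht hst)
    (summable_mul_exp_dotZ_smul_add_smul hμ hα hβ hs.le ht.le hst)
    ((hα.mul_left s).add (hβ.mul_left t))

lemma continuousOn_Pgen (hμ : ∀ k, 0 ≤ μ k) {U : Set (V d)} (hU : IsOpen U)
    (hsum : ∀ α ∈ U, Summable fun k => μ k * Real.exp (dotZ α k)) :
    ContinuousOn (Pgen μ) U := by
  intro γ hγ
  obtain ⟨ε, hε, hball⟩ := Metric.isOpen_iff.1 hU γ hγ
  have hconv : ConvexOn ℝ (Metric.ball γ ε) (Pgen μ) :=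
    ⟨convex_ball γ ε, fun α hα β hβ s t hs ht hst =>
      Pgen_smul_add_smul_le hμ (hsum α (hball hα)) (hsum β (hball hβ)) hs ht hst⟩
  exact ((hconv.continuousOn Metric.isOpen_ball).continuousAt
    (Metric.isOpen_ball.mem_nhds (Metric.mem_ball_self hε))).continuousWithinAt

lemma strictConvex_Dset (hμ : ∀ k, 0 ≤ μ k) (hirr : IrreducibleWalk μ)
    (hfin : FiniteNearD μ) :
    StrictConvex ℝ (Dset μ) := by
  intro α hα β hβ hne s t hs ht hst
  obtain ⟨U, hU, hDU, hsum⟩ := hfin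
  obtain ⟨k, hk, hk_ne⟩ := exists_ne_zero_dotZ_ne hirr hne
  have hlt : Pgen μ (s • α + t • β) < 1 := calc
    Pgen μ (s • α + t • β) < s * Pgen μ α + t * Pgen μ β :=
      Pgen_smul_add_smul_lt hμ (hsum α (hDU hα)) (hsum β (hDU hβ)) hk hk_ne hs ht hst
    _ ≤ s * 1 + t * 1 := by gcongr <;> assumption
    _ = 1 := by rw [mul_one, mul_one, hst]
  have hopen : IsOpen (U ∩ Pgen μ ⁻¹' Set.Iio 1) :=
    (continuousOn_Pgen hμ hU hsum).isOpen_inter_preimage hU isOpen_Iio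
  exact interior_maximal (fun γ hγ => show Pgen μ γ ≤ 1 from le_of_lt hγ.2) hopen
    ⟨hDU hlt.le, hlt⟩

end Convexity

/-- Under (A1), the set D = {α : P(α) ≤ 1} is compact and strictly convex. -/
theorem statement0 {d : ℕ} (μ : Zd d → ℝ) (hA1 : A1 μ) :
    IsCompact (Dset μ) ∧ StrictConvex ℝ (Dset μ) := by
  obtain ⟨⟨hμ, -⟩, hirr, hfin, -⟩ := hA1
  have hD : ∀ α ∈ Dset μ, Summable fun k => μ k * Real.exp (dotZ α k) :=
    fun _ hα => hfin.summable hα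
  exact ⟨Metric.isCompact_of_isClosed_isBounded (isClosed_Dset hμ hD)
    (isBounded_Dset hμ hirr hD), strictConvex_Dset hμ hirr hfin⟩
end
end

section
/- Under hypotheses (A1), for every k ∈ ℤ^d ∩ C there exist constants A_k, B_k > 0 such that for all nonzero m ∈ ℤ^d ∖ C, P_k(Z(τ) = m, τ < ∞) ≤ (A_k ‖m‖ + B_k) exp(−α(m/‖m‖)·m), where α(u) ∈ ∂D is the point where α ↦ α·u attains its maximum over D. -/
open scoped BigOperators RealInnerProductSpace
open Filter MeasureTheory Classical

attribute [local instance] Classical.propDecidable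

noncomputable section

open scoped ENNReal

/-- The exponential weight e^{α·m} as an extended nonnegative real. -/
def Eaw {d : ℕ} (α : V d) (m : Zd d) : ℝ≥0∞ := ENNReal.ofReal (Real.exp (dotZ α m))

lemma Eaw_ne_zero {d : ℕ} (α : V d) (m : Zd d) : Eaw α m ≠ 0 := by
  simp [Eaw, ENNReal.ofReal_eq_zero, not_le, Real.exp_pos]

lemma Eaw_ne_top {d : ℕ} (α : V d) (m : Zd d) : Eaw α m ≠ ⊤ := ENNReal.ofReal_ne_top

lemma dotZ_add {d : ℕ} (α : V d) (j l : Zd d) : dotZ α (j + l) = dotZ α j + dotZ α l := by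
  unfold dotZ
  rw [← Finset.sum_add_distrib]
  refine Finset.sum_congr rfl fun i _ => ?_
  have : ((j + l) i : ℝ) = (j i : ℝ) + (l i : ℝ) := by push_cast [Pi.add_apply]; ring
  rw [this]; ring

lemma dotZ_zero {d : ℕ} (α : V d) : dotZ α 0 = 0 := by
  unfold dotZ; simp

lemma Eaw_add {d : ℕ} (α : V d) (j l : Zd d) : Eaw α (j + l) = Eaw α j * Eaw α l := by
  unfold Eaw
  rw [dotZ_add, Real.exp_add, ENNReal.ofReal_mul (Real.exp_pos _).le]

lemma ofReal_tsum_le {ι : Type*} (f : ι → ℝ) (hf : ∀ i, 0 ≤ f i) :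
    ENNReal.ofReal (∑' i, f i) ≤ ∑' i, ENNReal.ofReal (f i) := by
  by_cases h : Summable f
  · rw [ENNReal.ofReal_tsum_of_nonneg hf h]
  · rw [tsum_eq_zero_of_not_summable h]; simp

lemma conv_bound {d : ℕ} (μ : Zd d → ℝ) (α : V d) (hμ0 : ∀ j, 0 ≤ μ j)
    (hsum : Summable fun l : Zd d => μ l * Real.exp (dotZ α l)) (hP : Pgen μ α ≤ 1)
    (w : Zd d → ℝ) (hw : ∀ j, 0 ≤ w j) :
    ∑' m : Zd d, ENNReal.ofReal (∑' j : Zd d, w j * μ (m - j)) * Eaw α m ≤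
      ∑' j : Zd d, ENNReal.ofReal (w j) * Eaw α j := by
  have hPgenE : ∑' l : Zd d, ENNReal.ofReal (μ l) * Eaw α l ≤ 1 := by
    have heq : ∑' l : Zd d, ENNReal.ofReal (μ l) * Eaw α l = ENNReal.ofReal (Pgen μ α) := by
      rw [Pgen, ENNReal.ofReal_tsum_of_nonneg
        (fun l => mul_nonneg (hμ0 l) (Real.exp_pos _).le) hsum]
      exact tsum_congr fun l => (ENNReal.ofReal_mul (hμ0 l)).symm
    rw [heq]; exact ENNReal.ofReal_le_one.mpr hP
  calc ∑' m : Zd d, ENNReal.ofReal (∑' j : Zd d, w j * μ (m - j)) * Eaw α m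
      ≤ ∑' m : Zd d, ∑' j : Zd d,
          ENNReal.ofReal (w j) * ENNReal.ofReal (μ (m - j)) * Eaw α m := by
        refine ENNReal.tsum_le_tsum fun m => ?_
        rw [ENNReal.tsum_mul_right]
        refine mul_le_mul_left ?_ _
        refine (ofReal_tsum_le _ fun j => mul_nonneg (hw j) (hμ0 _)).trans (le_of_eq ?_)
        exact tsum_congr fun j => ENNReal.ofReal_mul (hw j)
    _ = ∑' j : Zd d, ∑' m : Zd d,
          ENNReal.ofReal (w j) * ENNReal.ofReal (μ (m - j)) * Eaw α m := ENNReal.tsum_comm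
    _ = ∑' j : Zd d, ENNReal.ofReal (w j) *
          ∑' m : Zd d, ENNReal.ofReal (μ (m - j)) * Eaw α m := by
        refine tsum_congr fun j => ?_
        rw [← ENNReal.tsum_mul_left]
        exact tsum_congr fun m => by ring
    _ = ∑' j : Zd d, ENNReal.ofReal (w j) *
          (Eaw α j * ∑' l : Zd d, ENNReal.ofReal (μ l) * Eaw α l) := by
        refine tsum_congr fun j => ?_
        congr 1
        rw [← ENNReal.tsum_mul_left]
        rw [← (Equiv.addLeft j).tsum_eq (fun m => ENNReal.ofReal (μ (m - j)) * Eaw α m)]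
        refine tsum_congr fun l => ?_
        have h1 : (Equiv.addLeft j) l - j = l := by
          simp [Equiv.addLeft]
        have h2 : ((Equiv.addLeft j) l : Zd d) = j + l := rfl
        rw [h1, h2, Eaw_add]
        ring
    _ ≤ ∑' j : Zd d, ENNReal.ofReal (w j) * (Eaw α j * 1) := by
        refine ENNReal.tsum_le_tsum fun j => ?_
        exact mul_le_mul_right (mul_le_mul_right hPgenE _) _
    _ = ∑' j : Zd d, ENNReal.ofReal (w j) * Eaw α j := by simp

lemma killed_nonneg {d : ℕ} (μ : Zd d → ℝ) (C : Set (V d)) (k : Zd d)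
    (hμ0 : ∀ j, 0 ≤ μ j) : ∀ n m, 0 ≤ killedProb μ C k n m := by
  intro n
  induction n with
  | zero => intro m; simp only [killedProb]; split <;> norm_num
  | succ n ih =>
      intro m; simp only [killedProb]
      split
      · exact tsum_nonneg fun j => mul_nonneg (ih j) (hμ0 _)
      · exact le_refl 0

lemma exit_nonneg {d : ℕ} (μ : Zd d → ℝ) (C : Set (V d)) (k : Zd d)
    (hμ0 : ∀ j, 0 ≤ μ j) : ∀ n m, 0 ≤ exitProb μ C k n m := by
  intro n m
  cases n with
  | zero => simp only [exitProb]; split <;> norm_num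
  | succ n =>
      simp only [exitProb]
      split
      · exact tsum_nonneg fun j => mul_nonneg (killed_nonneg μ C k hμ0 n j) (hμ0 _)
      · exact le_refl 0

lemma step_nonneg {d : ℕ} (μ : Zd d → ℝ) (hμ0 : ∀ j, 0 ≤ μ j) :
    ∀ n m, 0 ≤ stepProb μ n m := by
  intro n
  induction n with
  | zero => intro m; simp only [stepProb]; split <;> norm_num
  | succ n ih =>
      intro m
      exact tsum_nonneg fun j => mul_nonneg (ih j) (hμ0 _)

/-- Supermartingale bound for the free walk. -/
lemma key1 {d : ℕ} (μ : Zd d → ℝ) (α : V d) (hμ0 : ∀ j, 0 ≤ μ j)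
    (hsum : Summable fun l : Zd d => μ l * Real.exp (dotZ α l)) (hP : Pgen μ α ≤ 1) :
    ∀ n, ∑' m : Zd d, ENNReal.ofReal (stepProb μ n m) * Eaw α m ≤ 1 := by
  intro n
  induction n with
  | zero =>
      have : ∑' m : Zd d, ENNReal.ofReal (stepProb μ 0 m) * Eaw α m
          = ENNReal.ofReal (stepProb μ 0 0) * Eaw α 0 := by
        refine tsum_eq_single 0 fun m hm => ?_
        simp [stepProb, hm]
      rw [this]
      simp [stepProb, Eaw, dotZ_zero]
  | succ n ih =>
      calc ∑' m : Zd d, ENNReal.ofReal (stepProb μ (n + 1) m) * Eaw α m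
          = ∑' m : Zd d,
              ENNReal.ofReal (∑' j : Zd d, stepProb μ n j * μ (m - j)) * Eaw α m := rfl
        _ ≤ ∑' j : Zd d, ENNReal.ofReal (stepProb μ n j) * Eaw α j :=
            conv_bound μ α hμ0 hsum hP _ (step_nonneg μ hμ0 n)
        _ ≤ 1 := ih

/-- Supermartingale bound for the killed walk plus accumulated exit mass. -/
lemma key2 {d : ℕ} (μ : Zd d → ℝ) (C : Set (V d)) (k : Zd d) (α : V d)
    (hμ0 : ∀ j, 0 ≤ μ j)
    (hsum : Summable fun l : Zd d => μ l * Real.exp (dotZ α l)) (hP : Pgen μ α ≤ 1) :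
    ∀ N, (∑' m : Zd d, ENNReal.ofReal (killedProb μ C k N m) * Eaw α m)
      + ∑ n ∈ Finset.range (N + 1),
          ∑' m : Zd d, ENNReal.ofReal (exitProb μ C k n m) * Eaw α m
      ≤ Eaw α k := by
  intro N
  induction N with
  | zero =>
      have h1 : ∑' m : Zd d, ENNReal.ofReal (killedProb μ C k 0 m) * Eaw α m
          = ENNReal.ofReal (killedProb μ C k 0 k) * Eaw α k := by
        refine tsum_eq_single k fun m hm => ?_
        simp [killedProb, hm]
      have h2 : ∑' m : Zd d, ENNReal.ofReal (exitProb μ C k 0 m) * Eaw α m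
          = ENNReal.ofReal (exitProb μ C k 0 k) * Eaw α k := by
        refine tsum_eq_single k fun m hm => ?_
        simp [exitProb, hm]
      rw [Finset.sum_range_one, h1, h2]
      by_cases hkC : toV k ∈ C
      · simp [killedProb, exitProb, hkC]
      · simp [killedProb, exitProb, hkC]
  | succ N ih =>
      have hpt : ∀ m : Zd d,
          ENNReal.ofReal (killedProb μ C k (N + 1) m)
            + ENNReal.ofReal (exitProb μ C k (N + 1) m)
          = ENNReal.ofReal (∑' j : Zd d, killedProb μ C k N j * μ (m - j)) := by
        intro m
        by_cases hmC : toV m ∈ C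
        · simp [killedProb, exitProb, hmC]
        · simp [killedProb, exitProb, hmC]
      have hcomb :
          (∑' m : Zd d, ENNReal.ofReal (killedProb μ C k (N + 1) m) * Eaw α m)
            + ∑' m : Zd d, ENNReal.ofReal (exitProb μ C k (N + 1) m) * Eaw α m
          ≤ ∑' j : Zd d, ENNReal.ofReal (killedProb μ C k N j) * Eaw α j := by
        rw [← ENNReal.tsum_add]
        calc ∑' m : Zd d, (ENNReal.ofReal (killedProb μ C k (N + 1) m) * Eaw α m
              + ENNReal.ofReal (exitProb μ C k (N + 1) m) * Eaw α m)
            = ∑' m : Zd d,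
                ENNReal.ofReal (∑' j : Zd d, killedProb μ C k N j * μ (m - j)) * Eaw α m := by
              refine tsum_congr fun m => ?_
              rw [← add_mul, hpt m]
          _ ≤ ∑' j : Zd d, ENNReal.ofReal (killedProb μ C k N j) * Eaw α j :=
              conv_bound μ α hμ0 hsum hP _ (killed_nonneg μ C k hμ0 N)
      calc (∑' m : Zd d, ENNReal.ofReal (killedProb μ C k (N + 1) m) * Eaw α m)
            + ∑ n ∈ Finset.range (N + 2),
                ∑' m : Zd d, ENNReal.ofReal (exitProb μ C k n m) * Eaw α m
          = ((∑' m : Zd d, ENNReal.ofReal (killedProb μ C k (N + 1) m) * Eaw α m)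
              + ∑' m : Zd d, ENNReal.ofReal (exitProb μ C k (N + 1) m) * Eaw α m)
            + ∑ n ∈ Finset.range (N + 1),
                ∑' m : Zd d, ENNReal.ofReal (exitProb μ C k n m) * Eaw α m := by
            rw [Finset.sum_range_succ]; ring
        _ ≤ (∑' j : Zd d, ENNReal.ofReal (killedProb μ C k N j) * Eaw α j)
            + ∑ n ∈ Finset.range (N + 1),
                ∑' m : Zd d, ENNReal.ofReal (exitProb μ C k n m) * Eaw α m :=
            add_le_add hcomb le_rfl
        _ ≤ Eaw α k := ih

/-- The total weighted exit mass is bounded by e^{α·k}. -/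
lemma key3 {d : ℕ} (μ : Zd d → ℝ) (C : Set (V d)) (k : Zd d) (α : V d)
    (hμ0 : ∀ j, 0 ≤ μ j)
    (hsum : Summable fun l : Zd d => μ l * Real.exp (dotZ α l)) (hP : Pgen μ α ≤ 1) :
    ∑' n : ℕ, ∑' m : Zd d, ENNReal.ofReal (exitProb μ C k n m) * Eaw α m ≤ Eaw α k := by
  rw [ENNReal.tsum_eq_iSup_nat]
  refine iSup_le fun N => ?_
  calc ∑ n ∈ Finset.range N,
        ∑' m : Zd d, ENNReal.ofReal (exitProb μ C k n m) * Eaw α m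
      ≤ ∑ n ∈ Finset.range (N + 1),
          ∑' m : Zd d, ENNReal.ofReal (exitProb μ C k n m) * Eaw α m :=
        Finset.sum_le_sum_of_subset (Finset.range_subset_range.mpr (Nat.le_succ N))
    _ ≤ (∑' m : Zd d, ENNReal.ofReal (killedProb μ C k N m) * Eaw α m)
        + ∑ n ∈ Finset.range (N + 1),
            ∑' m : Zd d, ENNReal.ofReal (exitProb μ C k n m) * Eaw α m := le_add_self
    _ ≤ Eaw α k := key2 μ C k α hμ0 hsum hP N

/-- Pointwise bound: exitTotal(k,m) e^{α·m} ≤ e^{α·k}. -/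
lemma key4 {d : ℕ} (μ : Zd d → ℝ) (C : Set (V d)) (k m : Zd d) (α : V d)
    (hμ0 : ∀ j, 0 ≤ μ j)
    (hsum : Summable fun l : Zd d => μ l * Real.exp (dotZ α l)) (hP : Pgen μ α ≤ 1) :
    exitTotal μ C k m * Real.exp (dotZ α m) ≤ Real.exp (dotZ α k) := by
  have h1 : ∑' n : ℕ, ENNReal.ofReal (exitProb μ C k n m) * Eaw α m ≤ Eaw α k := by
    refine le_trans (ENNReal.tsum_le_tsum fun n => ?_) (key3 μ C k α hμ0 hsum hP)
    exact ENNReal.le_tsum m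
  have h2 : ENNReal.ofReal (exitTotal μ C k m) * Eaw α m ≤ Eaw α k := by
    rw [ENNReal.tsum_mul_right] at h1
    refine le_trans (mul_le_mul_left ?_ _) h1
    rw [exitTotal]
    exact ofReal_tsum_le _ fun n => exit_nonneg μ C k hμ0 n m
  have hnn : 0 ≤ exitTotal μ C k m := tsum_nonneg fun n => exit_nonneg μ C k hμ0 n m
  have h3 : ENNReal.ofReal (exitTotal μ C k m * Real.exp (dotZ α m))
      ≤ ENNReal.ofReal (Real.exp (dotZ α k)) := by
    rw [ENNReal.ofReal_mul hnn]
    exact h2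
  exact (ENNReal.ofReal_le_ofReal_iff (Real.exp_pos _).le).mp h3

/-- under (A1), for every k ∈ ℤ^d ∩ C there are constants A_k, B_k > 0 with
P_k(Z(τ)=m, τ<∞) ≤ (A_k‖m‖ + B_k) e^{−α(m/‖m‖)·m} for all nonzero m ∈ ℤ^d ∖ C,
α(u) being the maximizer of α·u over D. -/
theorem statement6 {d : ℕ} (μ : Zd d → ℝ) (C : Set (V d)) (hA1 : A1 μ)
    (hC : IsOpenCone C) (αfun : V d → V d)
    (hα : ∀ u : V d, ‖u‖ = 1 → IsMaxOn' μ u (αfun u))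
    (k : Zd d) (hk : toV k ∈ C) :
    ∃ A B : ℝ, 0 < A ∧ 0 < B ∧ ∀ m : Zd d, m ≠ 0 → toV m ∉ C →
      exitTotal μ C k m ≤
        (A * ‖toV m‖ + B) * Real.exp (-(dotZ (αfun (‖toV m‖⁻¹ • toV m)) m)) := by
  obtain ⟨⟨hμ0, hμ1⟩, hirr, ⟨U, hUopen, hDU, hUsum⟩, hmean⟩ := hA1
  obtain ⟨n₀, hn₀⟩ := hirr k
  refine ⟨1, 1 / stepProb μ n₀ k, one_pos, by positivity, fun m hm hmC => ?_⟩
  set u : V d := ‖toV m‖⁻¹ • toV m with hu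
  have hmne : toV m ≠ 0 := by
    intro h
    apply hm
    funext i
    have h2 : (m i : ℝ) = 0 := by
      have := congrArg (fun v : V d => v i) h
      simpa [toV] using this
    show m i = 0
    exact_mod_cast h2
  have hnorm : ‖u‖ = 1 := by
    rw [hu, norm_smul, norm_inv, norm_norm, inv_mul_cancel₀ (norm_ne_zero_iff.mpr hmne)]
  obtain ⟨hαD, -⟩ := hα u hnorm
  set α := αfun u with hα'
  have hsum : Summable fun l : Zd d => μ l * Real.exp (dotZ α l) := hUsum α (hDU hαD)
  have hP : Pgen μ α ≤ 1 := hαD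
  -- bound on e^{α·k}
  have hstep : stepProb μ n₀ k * Real.exp (dotZ α k) ≤ 1 := by
    have h1 : ENNReal.ofReal (stepProb μ n₀ k) * Eaw α k ≤ 1 :=
      le_trans (ENNReal.le_tsum k) (key1 μ α hμ0 hsum hP n₀)
    have h2 : ENNReal.ofReal (stepProb μ n₀ k * Real.exp (dotZ α k)) ≤ 1 := by
      rw [ENNReal.ofReal_mul hn₀.le]; exact h1
    exact ENNReal.ofReal_le_one.mp h2
  have hek : Real.exp (dotZ α k) ≤ 1 / stepProb μ n₀ k := by
    rw [le_div_iff₀ hn₀]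
    linarith [hstep]
  have hmain := key4 μ C k m α hμ0 hsum hP
  have hpos : (0:ℝ) < Real.exp (dotZ α m) := Real.exp_pos _
  have h5 : exitTotal μ C k m ≤ Real.exp (dotZ α k) * Real.exp (-(dotZ α m)) := by
    rw [Real.exp_neg, ← div_eq_mul_inv, le_div_iff₀ hpos]
    exact hmain
  calc exitTotal μ C k m ≤ Real.exp (dotZ α k) * Real.exp (-(dotZ α m)) := h5
    _ ≤ (1 / stepProb μ n₀ k) * Real.exp (-(dotZ α m)) := by
        exact mul_le_mul_of_nonneg_right hek (Real.exp_pos _).le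
    _ ≤ (1 * ‖toV m‖ + 1 / stepProb μ n₀ k) * Real.exp (-(dotZ α m)) := by
        refine mul_le_mul_of_nonneg_right ?_ (Real.exp_pos _).le
        nlinarith [norm_nonneg (toV m)]
end
end
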